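/- arXiv:2307.13078 — 2 statements merged into one kernel-verified Lean document; each statement's English description precedes it below -/
import Mathlib

section
/- Let W be an m × n real matrix and b ∈ ℝᵐ, and let u̲₁, u̲₂, ū₁, ū₂ ∈ ℝⁿ satisfy u̲₁ ≤ u̲₂ and ū₂ ≤ ū₁ entrywise. For j = 1, 2 define z̄ⱼ = W·((ūⱼ + u̲ⱼ)/2) + |W|·((ūⱼ − u̲ⱼ)/2) + b and z̲ⱼ = W·((ūⱼ + u̲ⱼ)/2) − |W|·((ūⱼ − u̲ⱼ)/2) + b, where |W| is the entrywise absolute value of W. Then z̄₂ ≤ z̄₁ and z̲₁ ≤ z̲₂ entrywise. -/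
/-!
Splitting `W = W⁺ - W⁻` and `|W| = W⁺ + W⁻` into its entrywise positive and negative parts turns
the IBP bounds into `W⁺ ū - W⁻ u̲ + b` and `W⁺ u̲ - W⁻ ū + b`. Both matrices `W⁺` and `W⁻` have
nonnegative entries, so multiplying by them is monotone, and the two bounds are respectively
monotone in `ū`, antitone in `u̲`, and the other way round.
-/

open Matrix

section PosNegPart

variable {K : Type*} [Field K] [LinearOrder K] [IsStrictOrderedRing K]

lemma mul_midpoint_add_abs_mul_radius (w l u : K) :
    w * ((u + l) / 2) + |w| * ((u - l) / 2) = w⁺ * u - w⁻ * l := by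
  linear_combination (-((u + l) / 2)) * posPart_sub_negPart w
    - ((u - l) / 2) * posPart_add_negPart w

lemma mul_midpoint_sub_abs_mul_radius (w l u : K) :
    w * ((u + l) / 2) - |w| * ((u - l) / 2) = w⁺ * l - w⁻ * u := by
  linear_combination (-((u + l) / 2)) * posPart_sub_negPart w
    + ((u - l) / 2) * posPart_add_negPart w

variable {m n : Type*} [Fintype n]

lemma Matrix.mulVec_midpoint_add_abs_mulVec_radius (W : Matrix m n K) (l u : n → K) :
    W *ᵥ ((u + l) / 2) + W.map (|·|) *ᵥ ((u - l) / 2) = W.map (·⁺) *ᵥ u - W.map (·⁻) *ᵥ l := by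
  ext i
  simp only [Pi.add_apply, Pi.sub_apply, mulVec, dotProduct, map_apply, Pi.div_apply,
    Pi.ofNat_apply, ← Finset.sum_add_distrib, ← Finset.sum_sub_distrib,
    mul_midpoint_add_abs_mul_radius]

lemma Matrix.mulVec_midpoint_sub_abs_mulVec_radius (W : Matrix m n K) (l u : n → K) :
    W *ᵥ ((u + l) / 2) - W.map (|·|) *ᵥ ((u - l) / 2) = W.map (·⁺) *ᵥ l - W.map (·⁻) *ᵥ u := by
  ext i
  simp only [Pi.add_apply, Pi.sub_apply, mulVec, dotProduct, map_apply, Pi.div_apply,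
    Pi.ofNat_apply, ← Finset.sum_sub_distrib, mul_midpoint_sub_abs_mul_radius]

end PosNegPart

lemma Matrix.mulVec_mono_of_nonneg {R m n : Type*} [Semiring R] [PartialOrder R]
    [IsOrderedRing R] [Fintype n] {A : Matrix m n R} (hA : ∀ i j, 0 ≤ A i j) :
    Monotone (A *ᵥ ·) :=
  fun _ _ hxy i => dotProduct_le_dotProduct_of_nonneg_left hxy (hA i)

/-- Monotonicity of IBP affine bounds w.r.t. inclusion of input
intervals. If `u̲₁ ≤ u̲₂` and `ū₂ ≤ ū₁` entrywise, then the IBP upper bounds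
satisfy `z̄₂ ≤ z̄₁` and the IBP lower bounds satisfy `z̲₁ ≤ z̲₂` entrywise. -/
theorem ibp_affine_bounds_monotone
    (m n : ℕ) (W : Matrix (Fin m) (Fin n) ℝ) (b : Fin m → ℝ)
    (lb₁ lb₂ ub₁ ub₂ : Fin n → ℝ) (hlb : lb₁ ≤ lb₂) (hub : ub₂ ≤ ub₁) :
    W.mulVec ((ub₂ + lb₂) / 2) + (W.map fun a => |a|).mulVec ((ub₂ - lb₂) / 2) + b
        ≤ W.mulVec ((ub₁ + lb₁) / 2) + (W.map fun a => |a|).mulVec ((ub₁ - lb₁) / 2) + b ∧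
      W.mulVec ((ub₁ + lb₁) / 2) - (W.map fun a => |a|).mulVec ((ub₁ - lb₁) / 2) + b
        ≤ W.mulVec ((ub₂ + lb₂) / 2) - (W.map fun a => |a|).mulVec ((ub₂ - lb₂) / 2) + b := by
  have hpos := mulVec_mono_of_nonneg (A := W.map (·⁺)) fun i j => posPart_nonneg (W i j)
  have hneg := mulVec_mono_of_nonneg (A := W.map (·⁻)) fun i j => negPart_nonneg (W i j)
  simp only [mulVec_midpoint_add_abs_mulVec_radius, mulVec_midpoint_sub_abs_mulVec_radius]
  exact ⟨add_le_add_left (sub_le_sub (hpos hub) (hneg hlb)) b,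
    add_le_add_left (sub_le_sub (hpos hlb) (hneg hub)) b⟩
end

section
/- Let c ≥ 2 and M > 0. Consider an L-layer feed-forward network with output dimension d_L = c, monotonically non-decreasing continuous activations, an input x, a label y, and let R_cert(x, ε) = max_{i ≠ y}( z̄⁽ᴸ⁾(ε)_i − z̲⁽ᴸ⁾(ε)_y ) be the IBP-certified margin obtained by propagating the input interval [x − ε·𝟙, x + ε·𝟙] through the network. If R_cert(x, 0) < 0 and R_cert(x, M) ≥ 0, then the set Z = {ε ∈ [0, M] : R_cert(x, ε) = 0} is nonempty, the certified robust radius ε* := sInf Z satisfies R_cert(x, ε*) = 0, and ε* = sSup {ε ∈ [0, M] : R_cert(x, ε) < 0}. -/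
/-- IBP upper bound of an affine layer `u ↦ W u + b` on the input interval `[lb, ub]`:
`z̄ = W·(ū+u̲)/2 + |W|·(ū−u̲)/2 + b`. -/
noncomputable def ibpAffineUpper {m n : ℕ} (W : Matrix (Fin m) (Fin n) ℝ)
    (b : Fin m → ℝ) (lb ub : Fin n → ℝ) : Fin m → ℝ :=
  W.mulVec ((ub + lb) / 2) + (W.map fun a => |a|).mulVec ((ub - lb) / 2) + b

/-- IBP lower bound of an affine layer `u ↦ W u + b` on the input interval `[lb, ub]`:
`z̲ = W·(ū+u̲)/2 − |W|·(ū−u̲)/2 + b`. -/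
noncomputable def ibpAffineLower {m n : ℕ} (W : Matrix (Fin m) (Fin n) ℝ)
    (b : Fin m → ℝ) (lb ub : Fin n → ℝ) : Fin m → ℝ :=
  W.mulVec ((ub + lb) / 2) - (W.map fun a => |a|).mulVec ((ub - lb) / 2) + b

/-- Post-activation IBP bounds `(u̲⁽ℓ⁾(ε), ū⁽ℓ⁾(ε))` of a feed-forward network,
propagating the input interval `[x − ε·𝟙, x + ε·𝟙]`. -/
noncomputable def ibpPostBounds (d : ℕ → ℕ)
    (W : ∀ ℓ : ℕ, Matrix (Fin (d (ℓ + 1))) (Fin (d ℓ)) ℝ)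
    (b : ∀ ℓ : ℕ, Fin (d (ℓ + 1)) → ℝ)
    (σ : ℕ → ℝ → ℝ) (x : Fin (d 0) → ℝ) (ε : ℝ) :
    ∀ ℓ : ℕ, (Fin (d ℓ) → ℝ) × (Fin (d ℓ) → ℝ)
  | 0 => (fun i => x i - ε, fun i => x i + ε)
  | (ℓ + 1) =>
      (fun i => σ ℓ (ibpAffineLower (W ℓ) (b ℓ) (ibpPostBounds d W b σ x ε ℓ).1
          (ibpPostBounds d W b σ x ε ℓ).2 i),
       fun i => σ ℓ (ibpAffineUpper (W ℓ) (b ℓ) (ibpPostBounds d W b σ x ε ℓ).1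
          (ibpPostBounds d W b σ x ε ℓ).2 i))

/-- Final-layer (pre-activation) IBP output lower bound `z̲⁽ᴸ⁾(ε)` of an
`(L'+1)`-layer network. -/
noncomputable def ibpOutLower (d : ℕ → ℕ)
    (W : ∀ ℓ : ℕ, Matrix (Fin (d (ℓ + 1))) (Fin (d ℓ)) ℝ)
    (b : ∀ ℓ : ℕ, Fin (d (ℓ + 1)) → ℝ)
    (σ : ℕ → ℝ → ℝ) (x : Fin (d 0) → ℝ) (L' : ℕ) (ε : ℝ) : Fin (d (L' + 1)) → ℝ :=
  ibpAffineLower (W L') (b L') (ibpPostBounds d W b σ x ε L').1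
    (ibpPostBounds d W b σ x ε L').2

/-- Final-layer (pre-activation) IBP output upper bound `z̄⁽ᴸ⁾(ε)` of an
`(L'+1)`-layer network. -/
noncomputable def ibpOutUpper (d : ℕ → ℕ)
    (W : ∀ ℓ : ℕ, Matrix (Fin (d (ℓ + 1))) (Fin (d ℓ)) ℝ)
    (b : ∀ ℓ : ℕ, Fin (d (ℓ + 1)) → ℝ)
    (σ : ℕ → ℝ → ℝ) (x : Fin (d 0) → ℝ) (L' : ℕ) (ε : ℝ) : Fin (d (L' + 1)) → ℝ :=
  ibpAffineUpper (W L') (b L') (ibpPostBounds d W b σ x ε L').1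
    (ibpPostBounds d W b σ x ε L').2

/-- The IBP-certified margin function
`R_cert(x, ε) = max_{i ≠ y} ( z̄⁽ᴸ⁾(ε)_i − z̲⁽ᴸ⁾(ε)_y )`. -/
noncomputable def ibpCertMargin (d : ℕ → ℕ)
    (W : ∀ ℓ : ℕ, Matrix (Fin (d (ℓ + 1))) (Fin (d ℓ)) ℝ)
    (b : ∀ ℓ : ℕ, Fin (d (ℓ + 1)) → ℝ)
    (σ : ℕ → ℝ → ℝ) (x : Fin (d 0) → ℝ) (L' : ℕ) (y : Fin (d (L' + 1)))
    (ε : ℝ) : ℝ :=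
  ⨆ i : {i : Fin (d (L' + 1)) // i ≠ y},
    (ibpOutUpper d W b σ x L' ε i.1 - ibpOutLower d W b σ x L' ε y)

/-! The IBP affine layer is affine in the interval bounds, with the nonnegative coefficient
`(W + |W|)/2` on `ū` and the nonpositive coefficient `(W − |W|)/2` on `u̲`; the lower bound is
the upper bound of `(−W, −b)`, negated. Monotone continuous activations preserve this, so by
induction over the layers the propagated intervals widen continuously in `ε`, and
`R_cert(x, ·)`, a finite maximum of such functions, is continuous and monotone. For such an `f`
with `f 0 < 0 ≤ f M` the zeros in `[0, M]` form a closed set, nonempty by the intermediate value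
theorem; its least element `ε*` is a zero and `{ε ∈ [0, M] | f ε < 0} = [0, ε*)`. -/

lemma ibpAffineUpper_mono {m n : ℕ} (W : Matrix (Fin m) (Fin n) ℝ) (b : Fin m → ℝ)
    {lb lb' ub ub' : Fin n → ℝ} (hl : lb' ≤ lb) (hu : ub ≤ ub') :
    ibpAffineUpper W b lb ub ≤ ibpAffineUpper W b lb' ub' := by
  intro i
  simp only [ibpAffineUpper, Pi.add_apply, add_le_add_iff_right, Matrix.mulVec, dotProduct,
    Matrix.map_apply, ← Finset.sum_add_distrib, Pi.sub_apply, Pi.div_apply, Pi.ofNat_apply]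
  refine Finset.sum_le_sum fun j _ => ?_
  nlinarith [hl j, hu j, le_abs_self (W i j), neg_abs_le (W i j)]

lemma ibpAffineLower_eq_neg_ibpAffineUpper {m n : ℕ} (W : Matrix (Fin m) (Fin n) ℝ)
    (b : Fin m → ℝ) (lb ub : Fin n → ℝ) :
    ibpAffineLower W b lb ub = -ibpAffineUpper (-W) (-b) lb ub := by
  have habs : (-W).map (fun a => |a|) = W.map fun a => |a| := by ext; simp
  simp only [ibpAffineLower, ibpAffineUpper, Matrix.neg_mulVec, habs]
  abel

lemma ibpAffineLower_anti {m n : ℕ} (W : Matrix (Fin m) (Fin n) ℝ) (b : Fin m → ℝ)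
    {lb lb' ub ub' : Fin n → ℝ} (hl : lb' ≤ lb) (hu : ub ≤ ub') :
    ibpAffineLower W b lb' ub' ≤ ibpAffineLower W b lb ub := by
  simp only [ibpAffineLower_eq_neg_ibpAffineUpper, neg_le_neg_iff]
  exact ibpAffineUpper_mono _ _ hl hu

lemma Continuous.ibpAffineUpper {X : Type*} [TopologicalSpace X] {m n : ℕ}
    (W : Matrix (Fin m) (Fin n) ℝ) (b : Fin m → ℝ) {lb ub : X → Fin n → ℝ}
    (hl : Continuous lb) (hu : Continuous ub) :
    Continuous fun t => ibpAffineUpper W b (lb t) (ub t) := by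
  unfold _root_.ibpAffineUpper
  fun_prop

lemma Continuous.ibpAffineLower {X : Type*} [TopologicalSpace X] {m n : ℕ}
    (W : Matrix (Fin m) (Fin n) ℝ) (b : Fin m → ℝ) {lb ub : X → Fin n → ℝ}
    (hl : Continuous lb) (hu : Continuous ub) :
    Continuous fun t => ibpAffineLower W b (lb t) (ub t) := by
  unfold _root_.ibpAffineLower
  fun_prop

section PostBounds

variable (d : ℕ → ℕ) (W : ∀ ℓ : ℕ, Matrix (Fin (d (ℓ + 1))) (Fin (d ℓ)) ℝ)
  (b : ∀ ℓ : ℕ, Fin (d (ℓ + 1)) → ℝ) (σ : ℕ → ℝ → ℝ) (x : Fin (d 0) → ℝ)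

lemma ibpPostBounds_widen {ε ε' : ℝ} (hε : ε ≤ ε') :
    ∀ ℓ, (∀ k < ℓ, Monotone (σ k)) →
      (ibpPostBounds d W b σ x ε' ℓ).1 ≤ (ibpPostBounds d W b σ x ε ℓ).1 ∧
        (ibpPostBounds d W b σ x ε ℓ).2 ≤ (ibpPostBounds d W b σ x ε' ℓ).2
  | 0, _ => ⟨fun i => sub_le_sub_left hε (x i), fun i => add_le_add_right hε (x i)⟩
  | ℓ + 1, hσ => by
    obtain ⟨hl, hu⟩ := ibpPostBounds_widen hε ℓ fun k hk => hσ k (hk.trans ℓ.lt_succ_self)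
    have hσℓ := hσ ℓ ℓ.lt_succ_self
    exact ⟨fun i => hσℓ (ibpAffineLower_anti _ _ hl hu i),
      fun i => hσℓ (ibpAffineUpper_mono _ _ hl hu i)⟩

lemma continuous_ibpPostBounds :
    ∀ ℓ, (∀ k < ℓ, Continuous (σ k)) → Continuous fun ε => ibpPostBounds d W b σ x ε ℓ
  | 0, _ => by simp only [ibpPostBounds]; fun_prop
  | ℓ + 1, hσ => by
    have ih := continuous_ibpPostBounds ℓ fun k hk => hσ k (hk.trans ℓ.lt_succ_self)
    have hσℓ := hσ ℓ ℓ.lt_succ_self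
    simp only [ibpPostBounds]
    refine .prodMk (continuous_pi fun i => ?_) (continuous_pi fun i => ?_)
    · exact hσℓ.comp ((continuous_apply i).comp (ih.fst.ibpAffineLower _ _ ih.snd))
    · exact hσℓ.comp ((continuous_apply i).comp (ih.fst.ibpAffineUpper _ _ ih.snd))

end PostBounds

lemma monotone_ciSup_apply {ι α : Type*} [Finite ι] [Preorder α] {f : ι → α → ℝ}
    (hf : ∀ i, Monotone (f i)) : Monotone fun a => ⨆ i, f i a :=
  fun _ _ h => ciSup_mono (Set.finite_range _).bddAbove fun i => hf i h

lemma continuous_ciSup_apply {ι X : Type*} [Finite ι] [TopologicalSpace X] {f : ι → X → ℝ}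
    (hf : ∀ i, Continuous (f i)) : Continuous fun a => ⨆ i, f i a := by
  cases isEmpty_or_nonempty ι
  · simpa only [Real.iSup_of_isEmpty] using continuous_const
  · have := Fintype.ofFinite ι
    simpa only [← Finset.sup'_univ_eq_ciSup] using
      Continuous.finset_sup'_apply Finset.univ_nonempty fun i _ => hf i

section CertMargin

variable (d : ℕ → ℕ) (W : ∀ ℓ : ℕ, Matrix (Fin (d (ℓ + 1))) (Fin (d ℓ)) ℝ)
  (b : ∀ ℓ : ℕ, Fin (d (ℓ + 1)) → ℝ) (σ : ℕ → ℝ → ℝ) (x : Fin (d 0) → ℝ) (L' : ℕ)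
  (y : Fin (d (L' + 1)))

lemma monotone_ibpCertMargin (hσ : ∀ k < L', Monotone (σ k)) :
    Monotone (ibpCertMargin d W b σ x L' y) :=
  monotone_ciSup_apply fun i _ _ hε => by
    obtain ⟨hl, hu⟩ := ibpPostBounds_widen d W b σ x hε L' hσ
    exact sub_le_sub (ibpAffineUpper_mono _ _ hl hu i.1) (ibpAffineLower_anti _ _ hl hu y)

lemma continuous_ibpCertMargin (hσ : ∀ k < L', Continuous (σ k)) :
    Continuous (ibpCertMargin d W b σ x L' y) := by
  have h := continuous_ibpPostBounds d W b σ x L' hσ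
  refine continuous_ciSup_apply fun i => .sub ?_ ?_
  · exact (continuous_apply i.1).comp (h.fst.ibpAffineUpper _ _ h.snd)
  · exact (continuous_apply y).comp (h.fst.ibpAffineLower _ _ h.snd)

end CertMargin

lemma exists_isLeast_zeros_Icc {f : ℝ → ℝ} {a b : ℝ} (hf : ContinuousOn f (Set.Icc a b))
    (hab : a ≤ b) (ha : f a ≤ 0) (hb : 0 ≤ f b) :
    ∃ c, IsLeast {ε | ε ∈ Set.Icc a b ∧ f ε = 0} c := by
  obtain ⟨c, hc, hfc⟩ := intermediate_value_Icc hab hf ⟨ha, hb⟩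
  have hclosed : IsClosed {ε | ε ∈ Set.Icc a b ∧ f ε = 0} :=
    hf.preimage_isClosed_of_isClosed isClosed_Icc isClosed_singleton
  exact ⟨_, hclosed.isLeast_csInf ⟨c, hc, hfc⟩ ⟨a, fun _ hε => hε.1.1⟩⟩

lemma Monotone.setOf_neg_eq_Ico {f : ℝ → ℝ} (hf : Monotone f) {a b c : ℝ}
    (hc : IsLeast {ε | ε ∈ Set.Icc a b ∧ f ε = 0} c) :
    {ε | ε ∈ Set.Icc a b ∧ f ε < 0} = Set.Ico a c := by
  obtain ⟨⟨⟨hac, hcb⟩, hfc⟩, hleast⟩ := hc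
  ext ε
  constructor
  · rintro ⟨⟨haε, hεb⟩, hfε⟩
    exact ⟨haε, lt_of_not_ge fun hcε => (hfc ▸ hf hcε).not_gt hfε⟩
  · rintro ⟨haε, hεc⟩
    refine ⟨⟨haε, hεc.le.trans hcb⟩, (hfc ▸ hf hεc.le).lt_of_ne fun hfε => ?_⟩
    exact (hleast ⟨⟨haε, hεc.le.trans hcb⟩, hfε⟩).not_gt hεc

lemma Monotone.csInf_zeros_Icc_eq_csSup_neg {f : ℝ → ℝ} (hf : Monotone f) (hcont : Continuous f)
    {a b : ℝ} (ha : f a < 0) (hb : 0 ≤ f b) :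
    {ε | ε ∈ Set.Icc a b ∧ f ε = 0}.Nonempty ∧
    f (sInf {ε | ε ∈ Set.Icc a b ∧ f ε = 0}) = 0 ∧
    sInf {ε | ε ∈ Set.Icc a b ∧ f ε = 0} = sSup {ε | ε ∈ Set.Icc a b ∧ f ε < 0} := by
  obtain ⟨c, hc⟩ := exists_isLeast_zeros_Icc hcont.continuousOn
    (hf.reflect_lt (ha.trans_le hb)).le ha.le hb
  have hac : a < c := hc.1.1.1.lt_of_ne fun hac => ha.ne (hac ▸ hc.1.2)
  rw [hc.csInf_eq, hf.setOf_neg_eq_Ico hc, csSup_Ico hac]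
  exact ⟨⟨c, hc.1⟩, hc.1.2, rfl⟩

theorem certified_robust_radius_exists_general
    (L' : ℕ) (d : ℕ → ℕ)
    (W : ∀ ℓ : ℕ, Matrix (Fin (d (ℓ + 1))) (Fin (d ℓ)) ℝ)
    (b : ∀ ℓ : ℕ, Fin (d (ℓ + 1)) → ℝ)
    (σ : ℕ → ℝ → ℝ)
    (hσ : ∀ ℓ < L', Monotone (σ ℓ) ∧ Continuous (σ ℓ))
    (x : Fin (d 0) → ℝ) (y : Fin (d (L' + 1)))
    (M : ℝ)
    (h0 : ibpCertMargin d W b σ x L' y 0 < 0)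
    (hMv : 0 ≤ ibpCertMargin d W b σ x L' y M) :
    {ε | ε ∈ Set.Icc (0 : ℝ) M ∧ ibpCertMargin d W b σ x L' y ε = 0}.Nonempty ∧
    ibpCertMargin d W b σ x L' y
      (sInf {ε | ε ∈ Set.Icc (0 : ℝ) M ∧ ibpCertMargin d W b σ x L' y ε = 0}) = 0 ∧
    sInf {ε | ε ∈ Set.Icc (0 : ℝ) M ∧ ibpCertMargin d W b σ x L' y ε = 0}
      = sSup {ε | ε ∈ Set.Icc (0 : ℝ) M ∧ ibpCertMargin d W b σ x L' y ε < 0} :=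
  (monotone_ibpCertMargin d W b σ x L' y fun k hk => (hσ k hk).1).csInf_zeros_Icc_eq_csSup_neg
    (continuous_ibpCertMargin d W b σ x L' y fun k hk => (hσ k hk).2) h0 hMv

/-- Existence of the certified robust radius for IBP-certified
feed-forward networks. For an `L`-layer network (here `L = L' + 1 ≥ 1`) with
output dimension `c = d_L ≥ 2`, monotonically non-decreasing continuous hidden
activations, input `x`, label `y` and `M > 0`, if the IBP-certified margin
satisfies `R_cert(x, 0) < 0` and `R_cert(x, M) ≥ 0`, then the zero set
`Z = {ε ∈ [0, M] | R_cert(x, ε) = 0}` is nonempty, the certified robust radius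
`ε* = sInf Z` satisfies `R_cert(x, ε*) = 0`, and
`ε* = sSup {ε ∈ [0, M] | R_cert(x, ε) < 0}`. -/
theorem certified_robust_radius_exists
    (L' : ℕ) (d : ℕ → ℕ) (hd : 2 ≤ d (L' + 1))
    (W : ∀ ℓ : ℕ, Matrix (Fin (d (ℓ + 1))) (Fin (d ℓ)) ℝ)
    (b : ∀ ℓ : ℕ, Fin (d (ℓ + 1)) → ℝ)
    (σ : ℕ → ℝ → ℝ)
    (hσ : ∀ ℓ < L', Monotone (σ ℓ) ∧ Continuous (σ ℓ))
    (x : Fin (d 0) → ℝ) (y : Fin (d (L' + 1)))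
    (M : ℝ) (hM : 0 < M)
    (h0 : ibpCertMargin d W b σ x L' y 0 < 0)
    (hMv : 0 ≤ ibpCertMargin d W b σ x L' y M) :
    {ε | ε ∈ Set.Icc (0 : ℝ) M ∧ ibpCertMargin d W b σ x L' y ε = 0}.Nonempty ∧
    ibpCertMargin d W b σ x L' y
      (sInf {ε | ε ∈ Set.Icc (0 : ℝ) M ∧ ibpCertMargin d W b σ x L' y ε = 0}) = 0 ∧
    sInf {ε | ε ∈ Set.Icc (0 : ℝ) M ∧ ibpCertMargin d W b σ x L' y ε = 0}
      = sSup {ε | ε ∈ Set.Icc (0 : ℝ) M ∧ ibpCertMargin d W b σ x L' y ε < 0} :=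
  certified_robust_radius_exists_general L' d W b σ hσ x y M h0 hMv
end
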